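/- Let n ≥ 1, let Ω ⊆ 𝕆_sⁿ be an axially symmetric slice-domain, and let f : Ω → 𝕆 be weak slice regular. Then f is a slice function. -/

import Mathlib

/-! Octonions via the Cayley–Dickson construction on the quaternions,
the n-dimensional quadratic cone, the slice topology, and slice regularity. -/

noncomputable section
open Quaternion Topology

/-- The octonions, as `ℍ × ℍ` with the (L²) Euclidean norm and
Cayley–Dickson multiplication. -/
abbrev Oct : Type := WithLp 2 (ℍ × ℍ)

namespace Oct

def c1 (p : Oct) : ℍ := (WithLp.equiv 2 (ℍ × ℍ) p).1
def c2 (p : Oct) : ℍ := (WithLp.equiv 2 (ℍ × ℍ) p).2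
def mk (a b : ℍ) : Oct := (WithLp.equiv 2 (ℍ × ℍ)).symm (a, b)

instance : One Oct := ⟨mk 1 0⟩

/-- Cayley–Dickson multiplication. -/
instance : Mul Oct :=
  ⟨fun p q => mk (c1 p * c1 q - star (c2 q) * c2 p) (c2 q * c1 p + c2 p * star (c1 q))⟩

/-- Octonionic conjugation. -/
instance : Star Oct := ⟨fun p => mk (star (c1 p)) (-(c2 p))⟩

/-- Inverse: `p⁻¹ = ‖p‖⁻² • (star p)` (so `0⁻¹ = 0`). -/
instance : Inv Oct := ⟨fun p => (‖p‖ ^ 2)⁻¹ • star p⟩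

/-- The real inner product on `𝕆 ≅ ℝ⁸`, via polarization. -/
def oinner (p q : Oct) : ℝ := (1 / 4) * (‖p + q‖ ^ 2 - ‖p - q‖ ^ 2)

/-- The sphere `𝕊` of imaginary units of the octonions. -/
def Sph : Set Oct := {I | I * I = -1}

/-- The slice complex plane `ℂ_I = ℝ + ℝ I ⊆ 𝕆`. -/
def CI (I : Oct) : Set Oct := {z | ∃ s t : ℝ, z = s • (1 : Oct) + t • I}

end Oct

open Oct

/-- The point `x + y I ∈ ℂ_Iⁿ ⊆ 𝕆ⁿ`. -/
def aff {n : ℕ} (x y : Fin n → ℝ) (I : Oct) : Fin n → Oct :=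
  fun m => x m • (1 : Oct) + y m • I

/-- The embedding `ℝⁿ ⊆ 𝕆ⁿ`. -/
def ofRealn {n : ℕ} (x : Fin n → ℝ) : Fin n → Oct := fun m => x m • (1 : Oct)

/-- The slice `ℂ_Iⁿ ⊆ 𝕆ⁿ`. -/
def slicen (n : ℕ) (I : Oct) : Set (Fin n → Oct) := {q | ∃ x y : Fin n → ℝ, q = aff x y I}

/-- The `n`-dimensional quadratic cone `𝕆ₛⁿ = ⋃_{I ∈ 𝕊} ℂ_Iⁿ`. -/
def cone (n : ℕ) : Set (Fin n → Oct) := ⋃ I ∈ Sph, slicen n I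

/-- The slice topology `τ_s`: a set is open iff its trace on every slice `ℂ_Iⁿ`
is open (expressed via the canonical parametrizations `(x,y) ↦ x + yI`). -/
def τs (n : ℕ) : TopologicalSpace (Fin n → Oct) :=
  ⨆ I : Sph, TopologicalSpace.coinduced
    (fun p : (Fin n → ℝ) × (Fin n → ℝ) => aff p.1 p.2 I.1) inferInstance

/-- A slice-open subset of the quadratic cone. -/
def SliceOpen (n : ℕ) (Ω : Set (Fin n → Oct)) : Prop :=
  Ω ⊆ cone n ∧ IsOpen[τs n] Ω

/-- A slice-domain: a nonempty slice-connected slice-open subset of the cone. -/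
def SliceDomain (n : ℕ) (Ω : Set (Fin n → Oct)) : Prop :=
  SliceOpen n Ω ∧ @IsConnected _ (τs n) Ω

/-- Real-connectedness: `Ω ∩ ℝⁿ` is a (pre)connected subset of `ℝⁿ`. -/
def RealConnected (n : ℕ) (Ω : Set (Fin n → Oct)) : Prop :=
  IsPreconnected {x : Fin n → ℝ | ofRealn x ∈ Ω}

/-- Axially symmetric subsets of the cone. -/
def AxSymm (n : ℕ) (Ω : Set (Fin n → Oct)) : Prop :=
  ∀ (x y : Fin n → ℝ), ∀ I ∈ Sph, ∀ J ∈ Sph, aff x y I ∈ Ω → aff x y J ∈ Ω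

/-- The upper half-space `ℝ²ⁿ₊`: pairs `(x,y)` with `y = 0` or the first
nonzero coordinate of `y` positive. -/
def pos2n (n : ℕ) : Set ((Fin n → ℝ) × (Fin n → ℝ)) :=
  {p | p.2 = 0 ∨ ∃ m : Fin n, 0 < p.2 m ∧ ∀ k : Fin n, k < m → p.2 k = 0}

/-- `Ω_{s₁}`. -/
def s1 {n : ℕ} (Ω : Set (Fin n → Oct)) : Set ((Fin n → ℝ) × (Fin n → ℝ)) :=
  {p | ∃ I ∈ Sph, aff p.1 p.2 I ∈ Ω}

/-- `Ω_{s₂}`. -/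
def s2 {n : ℕ} (Ω : Set (Fin n → Oct)) : Set ((Fin n → ℝ) × (Fin n → ℝ)) :=
  {p | ∃ J ∈ Sph, ∃ K ∈ Sph, J ≠ K ∧ aff p.1 p.2 J ∈ Ω ∧ aff p.1 p.2 K ∈ Ω}

/-- Slice functions: induced on `Ω_{s₂}⁺` by a pair `(F₁, F₂)` via
`f(x + yI) = F₁(x,y) + I·F₂(x,y)`. -/
def IsSliceFun (n : ℕ) (Ω : Set (Fin n → Oct)) (f : (Fin n → Oct) → Oct) : Prop :=
  ∃ F₁ F₂ : (Fin n → ℝ) × (Fin n → ℝ) → Oct,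
    ∀ x y : Fin n → ℝ, (x, y) ∈ s2 Ω ∩ pos2n n → ∀ I ∈ Sph, aff x y I ∈ Ω →
      f (aff x y I) = F₁ (x, y) + I * F₂ (x, y)

/-- Holomorphy of a function of `n` slice variables, read through the
parametrization `(x,y) ↦ x + yI`: continuous partial derivatives (i.e. `C¹`)
and the Cauchy–Riemann equations `(∂/∂xₘ + I ∂/∂yₘ) g = 0` on `U`. -/
def Holo (n : ℕ) (I : Oct) (g : (Fin n → ℝ) × (Fin n → ℝ) → Oct)
    (U : Set ((Fin n → ℝ) × (Fin n → ℝ))) : Prop :=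
  ContDiffOn ℝ 1 g U ∧
  ∀ p ∈ U, ∀ m : Fin n,
    fderiv ℝ g p (Pi.single m 1, 0) + I * fderiv ℝ g p (0, Pi.single m 1) = 0

/-- Weak slice regularity: each restriction `f|_{Ω ∩ ℂ_Iⁿ}` is holomorphic. -/
def WSliceReg (n : ℕ) (Ω : Set (Fin n → Oct)) (f : (Fin n → Oct) → Oct) : Prop :=
  ∀ I ∈ Sph, Holo n I (fun p => f (aff p.1 p.2 I)) {p | aff p.1 p.2 I ∈ Ω}

/-- The complex structure `σ(a,b) = (−b,a)` on `𝕆²`. -/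
def sigma2 : Oct × Oct → Oct × Oct := fun w => (-w.2, w.1)

/-- Holomorphic stem maps: `F : V → 𝕆²` extends to a `C¹` map `G` on an open
neighborhood `U ⊇ V` satisfying `(∂/∂xₘ + σ ∂/∂yₘ) G = 0` on `U`. -/
def StemHolo (n : ℕ) (V : Set ((Fin n → ℝ) × (Fin n → ℝ)))
    (F : (Fin n → ℝ) × (Fin n → ℝ) → Oct × Oct) : Prop :=
  ∃ (U : Set ((Fin n → ℝ) × (Fin n → ℝ))) (G : (Fin n → ℝ) × (Fin n → ℝ) → Oct × Oct),
    IsOpen U ∧ V ⊆ U ∧ Set.EqOn G F V ∧ ContDiffOn ℝ 1 G U ∧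
    ∀ p ∈ U, ∀ m : Fin n,
      fderiv ℝ G p (Pi.single m 1, 0) + sigma2 (fderiv ℝ G p (0, Pi.single m 1)) = 0

/-- Strong slice regularity: `f` is induced by a holomorphic stem map on `Ω_{s₁}`. -/
def SSliceReg (n : ℕ) (Ω : Set (Fin n → Oct)) (f : (Fin n → Oct) → Oct) : Prop :=
  ∃ F : (Fin n → ℝ) × (Fin n → ℝ) → Oct × Oct, StemHolo n (s1 Ω) F ∧
    ∀ x y : Fin n → ℝ, ∀ I ∈ Sph, aff x y I ∈ Ω →
      f (aff x y I) = (F (x, y)).1 + I * (F (x, y)).2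

/-- An s-basis `{I, J, K}` of the octonions. -/
def IsSBasis (I J K : Oct) : Prop :=
  I ∈ Sph ∧ J ∈ Sph ∧ K ∈ Sph ∧
  LinearIndependent ℝ ![(1 : Oct), I, J, I * J, K, J * K, I * K, (I * J) * K] ∧
  Submodule.span ℝ (Set.range ![(1 : Oct), I, J, I * J, K, J * K, I * K, (I * J) * K]) = ⊤

/-- Iterated left multiplication `L_w^β = (L_{w₁})^{β₁} ∘ ⋯ ∘ (L_{wₙ})^{βₙ}`. -/
def Lpow {n : ℕ} (w : Fin n → Oct) (β : Fin n → ℕ) : Oct → Oct :=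
  fun a => (List.finRange n).foldr (fun ℓ c => (fun o => w ℓ * o)^[β ℓ] c) a

/-- The `*`-power `(q − p)^{*α} a = ∑_{β ≤ α} C(α,β) L_q^β (L_{−p}^{α−β} a)`. -/
def starPow {n : ℕ} (p : Fin n → Oct) (α : Fin n → ℕ) (a : Oct) (q : Fin n → Oct) : Oct :=
  ∑ β ∈ Finset.Iic α, (∏ ℓ, (α ℓ).choose (β ℓ)) • Lpow q β (Lpow (-p) (α - β) a)

/-- The `ℓ`-th slice derivative `∂_ℓ f (x + w) = (∂/∂x_ℓ) f (x + w)`. -/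
def sderiv {n : ℕ} (ℓ : Fin n) (f : (Fin n → Oct) → Oct) : (Fin n → Oct) → Oct :=
  fun q => deriv (fun t : ℝ => f (fun m => q m + (if m = ℓ then t else 0) • (1 : Oct))) 0

/-- The iterated slice derivative `f^{(α)} = (∂₁)^{α₁} ⋯ (∂ₙ)^{αₙ} f`. -/
def sderivMulti {n : ℕ} (α : Fin n → ℕ) (f : (Fin n → Oct) → Oct) : (Fin n → Oct) → Oct :=
  (List.finRange n).foldr (fun ℓ g => (sderiv ℓ)^[α ℓ] g) f

/-- The slice-polydisc `P̃(q₀, r)` (relative to `I ∈ 𝕊` with `q₀ ∈ ℂ_Iⁿ`):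
points `x + yJ` with `x ± yI` in the closed polydisc `P_I(q₀, r)`. -/
def polyDisc {n : ℕ} (q₀ : Fin n → Oct) (I : Oct) (r : Fin n → ℝ) : Set (Fin n → Oct) :=
  {q | ∃ x y : Fin n → ℝ, ∃ J ∈ Sph, q = aff x y J ∧
        (∀ ℓ, ‖aff x y I ℓ - q₀ ℓ‖ ≤ r ℓ) ∧ (∀ ℓ, ‖aff x (-y) I ℓ - q₀ ℓ‖ ≤ r ℓ)}

/-!
For an imaginary unit `I` put `g_I (x, y) = f (x + yI)`. Its stem
`F_I = ((g_I + g_I ∘ conj) / 2, -I (g_I - g_I ∘ conj) / 2)`, with `conj (x, y) = (x, -y)`,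
satisfies `g_I = F_I.1 + I F_I.2`. It is holomorphic from `ℝⁿ ⊗ ℂ` to `𝕆 ⊗ ℂ`, because `g_I`
is holomorphic and `I (I a) = -a`, and at real points it equals `(f x, 0)` whatever `I` is.
So `F_I - F_J` is holomorphic and vanishes on `ℝⁿ`. Restricting to complex lines, the
one-variable identity theorem makes it vanish on each component of the parameter domain that
meets `ℝⁿ`, and slice-connectedness of the axially symmetric `Ω` forces every component to meet
`ℝⁿ`. Hence `F_I` does not depend on `I`, and `F_{I₀}` exhibits `f` as a slice function.
-/

section ComplexStructure
open Metric Filter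

variable {V W : Type*} [NormedAddCommGroup V] [NormedSpace ℝ V]
  [NormedAddCommGroup W] [NormedSpace ℝ W]

/-- Reading `V × V` as `V ⊗ ℂ`, `prodRot` is multiplication by `i` and `prodConj` is complex
conjugation. -/
def prodRot : V × V →L[ℝ] V × V :=
  (-ContinuousLinearMap.snd ℝ V V).prod (ContinuousLinearMap.fst ℝ V V)

def prodConj : V × V →L[ℝ] V × V :=
  (ContinuousLinearMap.fst ℝ V V).prod (-ContinuousLinearMap.snd ℝ V V)

lemma prodRot_apply (v : V × V) : prodRot v = (-v.2, v.1) := rfl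

@[simp] lemma prodConj_apply (v : V × V) : prodConj v = (v.1, -v.2) := rfl

lemma norm_prodRot (v : V × V) : ‖prodRot v‖ = ‖v‖ := by
  simp [Prod.norm_def, prodRot_apply, max_comm]

def IsHolomorphicOn (L : W →L[ℝ] W) (g : V × V → W) (U : Set (V × V)) : Prop :=
  ∀ p ∈ U, DifferentiableAt ℝ g p ∧ ∀ v, fderiv ℝ g p (prodRot v) = L (fderiv ℝ g p v)

lemma IsHolomorphicOn.sub {L : W →L[ℝ] W} {g₁ g₂ : V × V → W} {U : Set (V × V)}
    (h₁ : IsHolomorphicOn L g₁ U) (h₂ : IsHolomorphicOn L g₂ U) :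
    IsHolomorphicOn L (g₁ - g₂) U := fun p hp => by
  obtain ⟨hd₁, hc₁⟩ := h₁ p hp
  obtain ⟨hd₂, hc₂⟩ := h₂ p hp
  refine ⟨hd₁.sub hd₂, fun v => ?_⟩
  simp only [fderiv_sub hd₁ hd₂, sub_apply, hc₁, hc₂, map_sub]

lemma map_prodRot_of_single {n : ℕ} {D : (Fin n → ℝ) × (Fin n → ℝ) →L[ℝ] W} {L : W →L[ℝ] W}
    (hL : ∀ w, L (L w) = -w) (h : ∀ m, D (Pi.single m 1, 0) + L (D (0, Pi.single m 1)) = 0)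
    (v : (Fin n → ℝ) × (Fin n → ℝ)) : D (prodRot v) = L (D v) := by
  have h' : ∀ m, D (0, Pi.single m 1) = L (D (Pi.single m 1, 0)) := fun m => by
    have := congrArg L (h m)
    rw [map_add, hL, map_zero, add_neg_eq_zero] at this
    exact this.symm
  have hsingle : ∀ (m : Fin n) (x : ℝ), (Pi.single m x : Fin n → ℝ) = x • Pi.single m 1 := by
    intro m x; rw [← Pi.single_smul, smul_eq_mul, mul_one]
  suffices (D ∘L prodRot : _ →ₗ[ℝ] W) = (L ∘L D : _ →ₗ[ℝ] W) from
    LinearMap.congr_fun this v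
  refine LinearMap.prod_ext (LinearMap.pi_ext fun m x => ?_) (LinearMap.pi_ext fun m x => ?_)
  · simp [prodRot_apply, hsingle m x, h']
  · have hneg : ((-Pi.single m 1, 0) : (Fin n → ℝ) × (Fin n → ℝ)) = -(Pi.single m 1, 0) := by
      simp
    simp only [ContinuousLinearMap.toLinearMap_comp, hsingle m x, map_smul, LinearMap.coe_comp,
      ContinuousLinearMap.coe_coe, LinearMap.coe_inr, Function.comp_apply, prodRot_apply, h']
    rw [hneg, map_neg, hL]

def dualPair (φ : StrongDual ℝ W) : W × W →L[ℝ] ℂ :=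
  Complex.ofRealCLM ∘L φ ∘L ContinuousLinearMap.fst ℝ W W +
    Complex.I • (Complex.ofRealCLM ∘L φ ∘L ContinuousLinearMap.snd ℝ W W)

lemma dualPair_apply (φ : StrongDual ℝ W) (w : W × W) :
    dualPair φ w = φ w.1 + Complex.I * φ w.2 := by
  simp [dualPair]

lemma dualPair_prodRot (φ : StrongDual ℝ W) (w : W × W) :
    dualPair φ (prodRot w) = Complex.I * dualPair φ w := by
  simp only [dualPair_apply, prodRot_apply, map_neg, Complex.ofReal_neg]
  linear_combination (-(φ w.2 : ℂ)) * Complex.I_sq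

lemma eq_zero_of_forall_dualPair_eq_zero {w : W × W} (h : ∀ φ, dualPair φ w = 0) : w = 0 := by
  have h' : ∀ φ : StrongDual ℝ W, φ w.1 = 0 ∧ φ w.2 = 0 := fun φ => by
    simpa [dualPair_apply, Complex.ext_iff] using h φ
  exact Prod.ext (SeparatingDual.eq_zero_of_forall_dual_eq_zero fun φ => (h' φ).1)
    (SeparatingDual.eq_zero_of_forall_dual_eq_zero fun φ => (h' φ).2)

def complexDir (d : V × V) : ℂ →L[ℝ] V × V :=
  Complex.reCLM.smulRight d + Complex.imCLM.smulRight (prodRot d)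

/-- The complex line `ζ ↦ z₀ + ζ d` for the complex structure `prodRot`. -/
def complexLine (z₀ d : V × V) (ζ : ℂ) : V × V := z₀ + complexDir d ζ

@[simp] lemma complexDir_apply (d : V × V) (ζ : ℂ) :
    complexDir d ζ = ζ.re • d + ζ.im • prodRot d := rfl

lemma complexLine_mem_ball {c z₀ d : V × V} {ρ : ℝ} {ζ : ℂ} (hz₀ : dist z₀ c < ρ / 4)
    (hd : ‖d‖ < ρ / 4) (hζ : ‖ζ‖ < 3 / 2) : complexLine z₀ d ζ ∈ ball c ρ := by
  have hdir : ‖complexDir d ζ‖ ≤ 2 * ‖ζ‖ * ‖d‖ := by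
    calc ‖complexDir d ζ‖ ≤ ‖ζ.re • d‖ + ‖ζ.im • prodRot d‖ := norm_add_le _ _
      _ = |ζ.re| * ‖d‖ + |ζ.im| * ‖d‖ := by
          rw [norm_smul, norm_smul, norm_prodRot, Real.norm_eq_abs, Real.norm_eq_abs]
      _ ≤ ‖ζ‖ * ‖d‖ + ‖ζ‖ * ‖d‖ := by
          gcongr
          exacts [Complex.abs_re_le_norm ζ, Complex.abs_im_le_norm ζ]
      _ = 2 * ‖ζ‖ * ‖d‖ := by ring
  have : 2 * ‖ζ‖ * ‖d‖ ≤ 3 * (ρ / 4) := by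
    have := mul_le_mul hζ.le hd.le (norm_nonneg d) (by norm_num)
    linarith
  rw [mem_ball, complexLine, dist_eq_norm, add_sub_right_comm]
  calc ‖z₀ - c + complexDir d ζ‖ ≤ ‖z₀ - c‖ + ‖complexDir d ζ‖ := norm_add_le _ _
    _ < ρ := by rw [← dist_eq_norm]; linarith

variable {U : Set (V × V)} {h : V × V → W × W}

/-- Composed with `dualPair φ`, `h` restricted to the line is a holomorphic function of one
variable, so the one-variable identity theorem applies. -/
lemma IsHolomorphicOn.complexLine_eq_zero (hh : IsHolomorphicOn prodRot h U) {z₀ d : V × V}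
    {r : ℝ} (hD : ∀ ζ : ℂ, ‖ζ‖ < r → complexLine z₀ d ζ ∈ U)
    (h0 : ∀ᶠ t : ℝ in 𝓝 0, h (z₀ + t • d) = 0) {ζ : ℂ} (hζ : ‖ζ‖ < r) :
    h (complexLine z₀ d ζ) = 0 := by
  refine eq_zero_of_forall_dualPair_eq_zero fun φ => ?_
  set ψ : ℂ → ℂ := fun ζ => dualPair φ (h (complexLine z₀ d ζ))
  have hdiff : DifferentiableOn ℂ ψ (ball 0 r) := fun ζ hζ => by
    obtain ⟨hd, hcr⟩ := hh _ (hD ζ (by simpa using hζ))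
    have hψ := (dualPair φ).hasFDerivAt.comp ζ
      (hd.hasFDerivAt.comp ζ ((complexDir d).hasFDerivAt.const_add z₀))
    refine (hψ.complexOfReal_hasFDerivAt ?_).differentiableAt.differentiableWithinAt
    simp only [ContinuousLinearMap.comp_apply, complexDir_apply, Complex.I_re, Complex.I_im,
      Complex.one_re, Complex.one_im, zero_smul, one_smul, zero_add, add_zero, hcr,
      dualPair_prodRot, smul_eq_mul]
  have hreal : ∀ᶠ t : ℝ in 𝓝[≠] 0, ψ t = 0 :=
    nhdsWithin_le_nhds (h0.mono fun t ht => by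
      simp only [ψ, complexLine, complexDir_apply, Complex.ofReal_re, Complex.ofReal_im, zero_smul,
        add_zero, ht, map_zero])
  have hfreq : ∃ᶠ ζ in 𝓝[≠] (0 : ℂ), ψ ζ = 0 := by
    have hto : Tendsto (fun t : ℝ => (t : ℂ)) (𝓝[≠] 0) (𝓝[≠] 0) :=
      Complex.continuous_ofReal.continuousWithinAt.tendsto_nhdsWithin fun _ _ => by simp_all
    exact hto.frequently hreal.frequently
  exact (hdiff.analyticOnNhd isOpen_ball).eqOn_zero_of_preconnected_of_frequently_eq_zero
    (convex_ball 0 r).isPreconnected (mem_ball_self ((norm_nonneg ζ).trans_lt hζ)) hfreq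
    (by simpa using hζ)

lemma IsHolomorphicOn.eventuallyEq_zero_of_real (hh : IsHolomorphicOn prodRot h U)
    (hU : IsOpen U) (hreal : ∀ x, (x, 0) ∈ U → h (x, 0) = 0) {x : V} (hx : (x, 0) ∈ U) :
    h =ᶠ[𝓝 (x, 0)] 0 := by
  obtain ⟨ρ, hρ, hball⟩ := Metric.isOpen_iff.1 hU _ hx
  filter_upwards [ball_mem_nhds _ (by positivity : 0 < ρ / 4)] with w hw
  rw [mem_ball, Prod.dist_eq, max_lt_iff] at hw
  -- `w = (w.1, 0) + i (w.2, 0)` lies on a complex line whose real segment consists of real points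
  have hD : ∀ ζ : ℂ, ‖ζ‖ < 3 / 2 → complexLine (w.1, 0) (w.2, 0) ζ ∈ U := fun ζ hζ =>
    hball <| complexLine_mem_ball (by simpa [Prod.dist_eq] using hw.1)
      (by rw [Prod.norm_def, norm_zero, max_eq_left (norm_nonneg _), ← dist_zero_right]
          exact hw.2) hζ
  have h0 : ∀ᶠ t : ℝ in 𝓝 0, h ((w.1, 0) + t • (w.2, 0)) = 0 := by
    filter_upwards [ball_mem_nhds (0 : ℝ) (by norm_num : (0 : ℝ) < 3 / 2)] with t ht
    have hmem := hD t (by simpa using ht)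
    simp only [complexLine, complexDir_apply, Complex.ofReal_re, Complex.ofReal_im, zero_smul,
      add_zero] at hmem
    simpa using hreal _ (by simpa using hmem)
  simpa [complexLine, prodRot_apply] using hh.complexLine_eq_zero hD h0 (ζ := Complex.I)
    (by norm_num)

lemma IsHolomorphicOn.eventuallyEq_zero_of_mem_closure (hh : IsHolomorphicOn prodRot h U)
    (hU : IsOpen U) {z : V × V} (hz : z ∈ U) (hcl : z ∈ closure {w | h =ᶠ[𝓝 w] 0}) :
    h =ᶠ[𝓝 z] 0 := by
  obtain ⟨ρ, hρ, hball⟩ := Metric.isOpen_iff.1 hU z hz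
  obtain ⟨z₀, hz₀, hdist⟩ := Metric.mem_closure_iff.1 hcl (ρ / 8) (by positivity)
  filter_upwards [ball_mem_nhds z (by positivity : 0 < ρ / 8)] with w hw
  have hD : ∀ ζ : ℂ, ‖ζ‖ < 3 / 2 → complexLine z₀ (w - z₀) ζ ∈ U := fun ζ hζ => by
    refine hball (complexLine_mem_ball ?_ ?_ hζ)
    · rw [dist_comm]; linarith
    · rw [← dist_eq_norm]
      linarith [dist_triangle w z z₀, mem_ball.1 hw]
  have h0 : ∀ᶠ t : ℝ in 𝓝 0, h (z₀ + t • (w - z₀)) = 0 := by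
    have : Tendsto (fun t : ℝ => z₀ + t • (w - z₀)) (𝓝 0) (𝓝 z₀) := by
      simpa using ((continuous_id.smul continuous_const).const_add z₀).tendsto (0 : ℝ)
    exact this.eventually hz₀
  simpa [complexLine] using hh.complexLine_eq_zero hD h0 (ζ := 1) (by norm_num)

lemma IsHolomorphicOn.isOpen_diff_setOf_eventuallyEq_zero (hh : IsHolomorphicOn prodRot h U)
    (hU : IsOpen U) : IsOpen (U \ {w | h =ᶠ[𝓝 w] 0}) := by
  convert hU.sdiff isClosed_closure using 1
  ext w
  refine ⟨fun ⟨hwU, hw⟩ => ⟨hwU, fun hcl => hw (hh.eventuallyEq_zero_of_mem_closure hU hwU hcl)⟩,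
    fun ⟨hwU, hw⟩ => ⟨hwU, fun h' => hw (subset_closure h')⟩⟩

end ComplexStructure

section Stem

variable {V W : Type*} [NormedAddCommGroup V] [NormedSpace ℝ V]
  [NormedAddCommGroup W] [NormedSpace ℝ W] {L : W →L[ℝ] W} {g : V × V → W}

/-- The solution `(F₁, F₂)` of `g = F₁ + L F₂`, `g ∘ prodConj = F₁ - L F₂` when `L ∘ L = -1`. -/
def stem (L : W →L[ℝ] W) (g : V × V → W) (p : V × V) : W × W :=
  ((2⁻¹ : ℝ) • (g p + g (prodConj p)), -((2⁻¹ : ℝ) • L (g p - g (prodConj p))))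

lemma stem_fst_add_stem_snd (hL : ∀ w, L (L w) = -w) (p : V × V) :
    (stem L g p).1 + L (stem L g p).2 = g p := by
  simp only [stem, map_neg, map_smul, map_sub, hL]
  module

lemma stem_mk_zero (x : V) : stem L g (x, 0) = (g (x, 0), 0) := by
  simp only [stem, prodConj_apply, neg_zero, sub_self, map_zero, smul_zero, Prod.mk.injEq, and_true]
  module

lemma isHolomorphicOn_stem (hL : ∀ w, L (L w) = -w) {U : Set (V × V)}
    (hU : ∀ p ∈ U, prodConj p ∈ U) (hg : IsHolomorphicOn L g U) :
    IsHolomorphicOn prodRot (stem L g) U := fun p hp => by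
  obtain ⟨hd₁, hc₁⟩ := hg p hp
  obtain ⟨hd₂, hc₂⟩ := hg _ (hU p hp)
  have h₂ := hd₂.hasFDerivAt.comp p (prodConj : V × V →L[ℝ] V × V).hasFDerivAt
  have hD : HasFDerivAt (stem L g) _ p := ((hd₁.hasFDerivAt.add h₂).const_smul (2⁻¹ : ℝ)).prodMk
    ((L.hasFDerivAt.comp p (hd₁.hasFDerivAt.sub h₂)).const_smul (2⁻¹ : ℝ)).neg
  refine ⟨hD.differentiableAt, fun v => ?_⟩
  have hconj : prodConj (prodRot v) = -prodRot (prodConj v) := by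
    simp [prodConj_apply, prodRot_apply]
  rw [hD.fderiv]
  simp only [ContinuousLinearMap.prod_apply, neg_apply, smul_apply, ContinuousLinearMap.comp_apply,
    add_apply, sub_apply, hconj, map_neg, hc₁, hc₂, map_sub, hL]
  ext <;> simp only [prodRot_apply] <;> module

end Stem

namespace Oct

@[simp] lemma c1_mk (a b : ℍ) : c1 (mk a b) = a := rfl
@[simp] lemma c2_mk (a b : ℍ) : c2 (mk a b) = b := rfl
@[simp] lemma c1_add (p q : Oct) : c1 (p + q) = c1 p + c1 q := rfl
@[simp] lemma c2_add (p q : Oct) : c2 (p + q) = c2 p + c2 q := rfl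
@[simp] lemma c1_neg (p : Oct) : c1 (-p) = -c1 p := rfl
@[simp] lemma c2_neg (p : Oct) : c2 (-p) = -c2 p := rfl
@[simp] lemma c1_smul (s : ℝ) (p : Oct) : c1 (s • p) = s • c1 p := rfl
@[simp] lemma c2_smul (s : ℝ) (p : Oct) : c2 (s • p) = s • c2 p := rfl
@[simp] lemma c1_zero : c1 0 = 0 := rfl
@[simp] lemma c2_zero : c2 0 = 0 := rfl
@[simp] lemma c1_one : c1 1 = 1 := rfl
@[simp] lemma c2_one : c2 1 = 0 := rfl
@[simp] lemma c1_mul (p q : Oct) : c1 (p * q) = c1 p * c1 q - star (c2 q) * c2 p := rfl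
@[simp] lemma c2_mul (p q : Oct) : c2 (p * q) = c2 q * c1 p + c2 p * star (c1 q) := rfl

lemma ext {p q : Oct} (h1 : c1 p = c1 q) (h2 : c2 p = c2 q) : p = q :=
  (WithLp.equiv 2 (ℍ × ℍ)).injective (Prod.ext h1 h2)

instance : NonUnitalNonAssocRing Oct where
  left_distrib p q r := by apply Oct.ext <;> simp <;> noncomm_ring
  right_distrib p q r := by apply Oct.ext <;> simp <;> noncomm_ring
  zero_mul p := by apply Oct.ext <;> simp
  mul_zero p := by apply Oct.ext <;> simp

instance : IsScalarTower ℝ Oct Oct :=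
  ⟨fun s p q => by apply Oct.ext <;> simp [smul_sub, smul_add]⟩

instance : SMulCommClass ℝ Oct Oct :=
  ⟨fun s p q => by apply Oct.ext <;> simp [smul_sub, smul_add]⟩

instance : NeZero (1 : Oct) := ⟨fun h => by simpa using congrArg c1 h⟩

variable {I : Oct}

lemma mem_Sph : I ∈ Sph ↔ I * I = -1 := Iff.rfl

lemma re_c1_of_mem_Sph (hI : I ∈ Sph) : (c1 I).re = 0 := by
  have h1 : c1 I * c1 I - star (c2 I) * c2 I = -1 := congrArg c1 hI
  have h2 : c2 I * (c1 I + star (c1 I)) = 0 := by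
    rw [mul_add]; simpa using congrArg c2 hI
  rcases mul_eq_zero.1 h2 with hB | hA
  · rw [hB, star_zero, zero_mul, sub_zero] at h1
    have hre := congrArg QuaternionAlgebra.re h1
    have hi := congrArg QuaternionAlgebra.imI h1
    have hj := congrArg QuaternionAlgebra.imJ h1
    have hk := congrArg QuaternionAlgebra.imK h1
    simp only [re_mul, re_neg, re_one, imI_mul, imI_neg, imI_one, neg_zero, imJ_mul, imJ_neg,
      imJ_one, imK_mul, imK_neg, imK_one] at hre hi hj hk
    nlinarith
  · have := congrArg QuaternionAlgebra.re hA
    simpa only [re_add, re_star, re_zero, add_self_eq_zero] using this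

lemma star_c1_of_mem_Sph (hI : I ∈ Sph) : star (c1 I) = -c1 I :=
  Quaternion.star_eq_neg.2 (re_c1_of_mem_Sph hI)

lemma c1_mul_self_of_mem_Sph (hI : I ∈ Sph) : c1 I * c1 I = -((normSq (c1 I) : ℝ) : ℍ) := by
  rw [← Quaternion.self_mul_star, star_c1_of_mem_Sph hI, mul_neg, neg_neg]

lemma normSq_c1_add_normSq_c2 (hI : I ∈ Sph) : normSq (c1 I) + normSq (c2 I) = 1 := by
  have h1 : c1 I * c1 I - star (c2 I) * c2 I = -1 := congrArg c1 hI
  rw [c1_mul_self_of_mem_Sph hI, Quaternion.star_mul_self] at h1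
  have := congrArg QuaternionAlgebra.re h1
  simp only [re_sub, re_neg, re_coe, re_one] at this
  linarith

lemma mul_mul_self_of_mem_Sph (hI : I ∈ Sph) (c : Oct) : I * (I * c) = -c := by
  have hsum := normSq_c1_add_normSq_c2 hI
  have hAA := c1_mul_self_of_mem_Sph hI
  set A := c1 I
  set B := c2 I
  apply Oct.ext
  · simp only [c1_mul, c2_mul, c1_neg, star_add, star_mul, star_star, star_c1_of_mem_Sph hI]
    calc A * (A * c1 c - star (c2 c) * B) - (-A * star (c2 c) + c1 c * star B) * B
        = A * A * c1 c - c1 c * (star B * B) := by noncomm_ring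
      _ = -((normSq A + normSq B) • c1 c) := by
        rw [hAA, Quaternion.star_mul_self, Quaternion.mul_coe_eq_smul, neg_mul,
          Quaternion.coe_mul_eq_smul, add_smul]
        abel
      _ = -c1 c := by rw [hsum, one_smul]
  · simp only [c1_mul, c2_mul, c2_neg, star_sub, star_mul, star_star, star_c1_of_mem_Sph hI]
    calc (c2 c * A + B * star (c1 c)) * A + B * (star (c1 c) * -A - star B * c2 c)
        = c2 c * (A * A) - B * star B * c2 c := by noncomm_ring
      _ = -((normSq A + normSq B) • c2 c) := by
        rw [hAA, Quaternion.self_mul_star, mul_neg, Quaternion.mul_coe_eq_smul,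
          Quaternion.coe_mul_eq_smul, add_smul]
        abel
      _ = -c2 c := by rw [hsum, one_smul]

lemma neg_mem_Sph (hI : I ∈ Sph) : -I ∈ Sph := by
  rwa [mem_Sph, neg_mul_neg]

lemma ne_zero_of_mem_Sph (hI : I ∈ Sph) : I ≠ 0 := by
  rintro rfl
  rw [mem_Sph, zero_mul, zero_eq_neg] at hI
  exact one_ne_zero hI

lemma exists_mem_Sph_ne_ne_neg (I : Oct) : ∃ K ∈ Sph, K ≠ I ∧ K ≠ -I := by
  obtain ⟨q, hq⟩ : ∃ q : ℍ, q * q = -1 := ⟨⟨0, 1, 0, 0⟩, by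
    show (⟨0, 1, 0, 0⟩ : ℍ) * ⟨0, 1, 0, 0⟩ = -1
    ext <;> simp⟩
  by_cases h : c2 I = 0
  · refine ⟨mk 0 1, by apply Oct.ext <;> simp, fun h' => ?_, fun h' => ?_⟩ <;>
      simpa [h] using congrArg c2 h'
  · refine ⟨mk q 0, by apply Oct.ext <;> simp [hq], fun h' => ?_, fun h' => ?_⟩ <;>
      exact h (by simpa [eq_comm] using congrArg c2 h')

lemma re_c1_smul_one_add_smul (hI : I ∈ Sph) (s t : ℝ) : (c1 (s • 1 + t • I)).re = s := by
  simp [re_c1_of_mem_Sph hI]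

lemma smul_mul_smul_of_mem_Sph (hI : I ∈ Sph) (a : ℝ) : (a • I) * (a • I) = (a * a) • (-1) := by
  rw [smul_mul_assoc, mul_smul_comm, smul_smul, mem_Sph.1 hI]

lemma smul_eq_smul_iff_of_mem_Sph {K : Oct} (hI : I ∈ Sph) (hK : K ∈ Sph) {a b : ℝ} :
    a • I = b • K ↔ (a = 0 ∧ b = 0) ∨ (a = b ∧ I = K) ∨ (a = -b ∧ I = -K) := by
  refine ⟨fun h => ?_, ?_⟩
  · have hsq : (a * a) • (-1 : Oct) = (b * b) • (-1) := by
      rw [← smul_mul_smul_of_mem_Sph hI, ← smul_mul_smul_of_mem_Sph hK, h]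
    rcases mul_self_eq_mul_self_iff.1 (smul_left_injective ℝ (neg_ne_zero.2 one_ne_zero) hsq)
      with rfl | rfl
    · by_cases ha : a = 0
      · exact Or.inl ⟨ha, ha⟩
      · exact Or.inr (Or.inl ⟨rfl, smul_right_injective Oct ha h⟩)
    · by_cases hb : b = 0
      · exact Or.inl ⟨by rw [hb, neg_zero], hb⟩
      · refine Or.inr (Or.inr ⟨rfl, smul_right_injective Oct hb ?_⟩)
        show b • I = b • -K
        rw [smul_neg, ← h, neg_smul, neg_neg]
  · rintro (⟨rfl, rfl⟩ | ⟨rfl, rfl⟩ | ⟨rfl, rfl⟩) <;> simp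

def lmul (I : Oct) : Oct →L[ℝ] Oct := (LinearMap.mul ℝ Oct I).toContinuousLinearMap

@[simp] lemma lmul_apply (I a : Oct) : lmul I a = I * a := rfl

lemma lmul_lmul_of_mem_Sph (hI : I ∈ Sph) (a : Oct) : lmul I (lmul I a) = -a :=
  mul_mul_self_of_mem_Sph hI a

lemma Sph_nonempty : Sph.Nonempty :=
  let ⟨K, hK, _⟩ := exists_mem_Sph_ne_ne_neg 0
  ⟨K, hK⟩

end Oct

section Aff
open Oct
variable {n : ℕ}

lemma aff_neg_right (x y : Fin n → ℝ) (I : Oct) : aff x (-y) I = aff x y (-I) := by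
  ext1 m; simp [aff]

lemma aff_zero_right (x : Fin n → ℝ) (I J : Oct) : aff x 0 I = aff x 0 J := by
  ext1 m; simp [aff]

lemma aff_eq_aff_iff {x y x' y' : Fin n → ℝ} {I J : Oct} (hI : I ∈ Sph) (hJ : J ∈ Sph) :
    aff x y I = aff x' y' J ↔
      x = x' ∧ ((y = 0 ∧ y' = 0) ∨ (y = y' ∧ I = J) ∨ (y = -y' ∧ I = -J)) := by
  refine ⟨fun h => ?_, ?_⟩
  · obtain rfl : x = x' := funext fun m => by
      have := congrArg (fun q => (c1 q).re) (congrFun h m)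
      rwa [aff, aff, re_c1_smul_one_add_smul hI, re_c1_smul_one_add_smul hJ] at this
    have hy : ∀ m, y m • I = y' m • J := fun m => add_left_cancel (congrFun h m)
    refine ⟨rfl, ?_⟩
    by_cases h0 : y = 0
    · subst h0
      refine Or.inl ⟨rfl, funext fun m => ?_⟩
      have := (hy m).symm
      rw [Pi.zero_apply, zero_smul, smul_eq_zero] at this
      exact this.resolve_right (ne_zero_of_mem_Sph hJ)
    obtain ⟨m₀, hm₀⟩ := Function.ne_iff.1 h0
    rcases (smul_eq_smul_iff_of_mem_Sph hI hJ).1 (hy m₀) with ⟨h1, -⟩ | ⟨-, rfl⟩ | ⟨-, rfl⟩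
    · exact absurd h1 hm₀
    · exact Or.inr (Or.inl
        ⟨funext fun m => smul_left_injective ℝ (ne_zero_of_mem_Sph hI) (hy m), rfl⟩)
    · refine Or.inr (Or.inr
        ⟨funext fun m => smul_left_injective ℝ (ne_zero_of_mem_Sph hJ) ?_, rfl⟩)
      simp only [Pi.neg_apply, neg_smul, ← hy m, smul_neg, neg_neg]
  · rintro ⟨rfl, ⟨rfl, rfl⟩ | ⟨rfl, rfl⟩ | ⟨rfl, rfl⟩⟩
    · exact aff_zero_right x I J
    · rfl
    · rw [aff_neg_right, neg_neg]

end Aff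


section Slices
open Oct Filter
variable {n : ℕ} {Ω : Set (Fin n → Oct)} {I₀ : Oct}

def sliceParams (Ω : Set (Fin n → Oct)) (I : Oct) : Set ((Fin n → ℝ) × (Fin n → ℝ)) :=
  {p | aff p.1 p.2 I ∈ Ω}

lemma isOpen_τs_iff {S : Set (Fin n → Oct)} :
    IsOpen[τs n] S ↔ ∀ I ∈ Sph, IsOpen (sliceParams S I) := by
  rw [τs, isOpen_iSup_iff]
  simp only [isOpen_coinduced, Subtype.forall]
  rfl

lemma AxSymm.sliceParams_eq (hax : AxSymm n Ω) {I J : Oct} (hI : I ∈ Sph) (hJ : J ∈ Sph) :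
    sliceParams Ω I = sliceParams Ω J :=
  Set.ext fun p => ⟨hax p.1 p.2 I hI J hJ, hax p.1 p.2 J hJ I hI⟩

lemma AxSymm.prodConj_mem_sliceParams (hax : AxSymm n Ω) {I : Oct} (hI : I ∈ Sph)
    {p : (Fin n → ℝ) × (Fin n → ℝ)} (hp : p ∈ sliceParams Ω I) :
    prodConj p ∈ sliceParams Ω I := by
  show aff p.1 (-p.2) I ∈ Ω
  rw [aff_neg_right]
  exact hax _ _ I hI (-I) (neg_mem_Sph hI) hp

lemma sliceParams_setOf_aff {Q : Set ((Fin n → ℝ) × (Fin n → ℝ))} {T : Set Oct} (hT : T ⊆ Sph)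
    (hTneg : ∀ J ∈ T, -J ∈ T) (hQ : ∀ p ∈ Q, p.2 ≠ 0) {K : Oct} (hK : K ∈ Sph) :
    sliceParams {q | ∃ p ∈ Q, ∃ J ∈ T, q = aff p.1 p.2 J} K =
      {_p | K ∈ T} ∩ (Q ∪ prodConj ⁻¹' Q) := by
  ext p
  constructor
  · rintro ⟨p', hp', J, hJT, heq⟩
    obtain ⟨h1, ⟨-, h2⟩ | ⟨h2, rfl⟩ | ⟨h2, rfl⟩⟩ := (aff_eq_aff_iff hK (hT hJT)).1 heq
    · exact absurd h2 (hQ p' hp')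
    · exact ⟨hJT, Or.inl (by rwa [Prod.ext h1 h2])⟩
    · refine ⟨by simpa using hTneg _ hJT, Or.inr ?_⟩
      rwa [Set.mem_preimage, prodConj_apply, h1, h2, neg_neg]
  · rintro ⟨hKT, hp | hp⟩
    · exact ⟨p, hp, K, hKT, rfl⟩
    · exact ⟨prodConj p, hp, -K, hTneg K hKT, by rw [prodConj_apply, aff_neg_right, neg_neg]⟩

/-- Equivalently: every connected component of `sliceParams Ω I₀` meets `ℝⁿ × {0}`. -/
theorem SliceDomain.sliceParams_subset (hΩ : SliceDomain n Ω) (hax : AxSymm n Ω)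
    (hI₀ : I₀ ∈ Sph) {P : Set ((Fin n → ℝ) × (Fin n → ℝ))} (hP : IsOpen P)
    (hUP : IsOpen (sliceParams Ω I₀ \ P))
    (hreal : ∀ x, (x, 0) ∈ sliceParams Ω I₀ → (x, 0) ∈ P) : sliceParams Ω I₀ ⊆ P := by
  set U := sliceParams Ω I₀
  have hU : IsOpen U := isOpen_τs_iff.1 hΩ.1.2 I₀ hI₀
  have hUJ : ∀ J ∈ Sph, sliceParams Ω J = U := fun J hJ => hax.sliceParams_eq hJ hI₀
  set T : Set Oct := {J | J ∈ Sph ∧ J ≠ I₀ ∧ J ≠ -I₀}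
  have hTneg : ∀ J ∈ T, -J ∈ T := fun J ⟨hJ, hJ₁, hJ₂⟩ =>
    ⟨neg_mem_Sph hJ, fun h => hJ₂ (by rw [← h, neg_neg]), fun h => hJ₁ (neg_injective h)⟩
  have hUPreal : ∀ p ∈ U \ P, p.2 ≠ 0 := fun p hp h2 => by
    rw [show p = (p.1, 0) from Prod.ext rfl h2] at hp
    exact hp.2 (hreal _ hp.1)
  -- `B` and `Ω \ B` are both slice-open, and `B` meets `Ω` as soon as `U ⊄ P`
  set B : Set (Fin n → Oct) := {q | ∃ p ∈ U \ P, ∃ J ∈ T, q = aff p.1 p.2 J}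
  have hB : ∀ J ∈ Sph, sliceParams B J = {_p | J ∈ T} ∩ ((U \ P) ∪ prodConj ⁻¹' (U \ P)) :=
    fun J hJ => sliceParams_setOf_aff (fun _ h => h.1) hTneg hUPreal hJ
  have hBopen : IsOpen[τs n] B := isOpen_τs_iff.2 fun J hJ => by
    rw [hB J hJ]
    by_cases hc : J ∈ T
    · simpa [hc] using hUP.union (hUP.preimage prodConj.continuous)
    · simp [hc]
  have hAopen : IsOpen[τs n] (Ω \ B) := isOpen_τs_iff.2 fun J hJ => by
    change IsOpen (sliceParams Ω J \ sliceParams B J)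
    rw [hUJ J hJ, hB J hJ]
    by_cases hc : J ∈ T
    · convert hU.inter (hP.inter (hP.preimage prodConj.continuous)) using 1
      ext p
      have := hax.prodConj_mem_sliceParams hI₀ (p := p)
      simp only [Set.mem_sdiff, Set.mem_inter_iff, Set.mem_union, Set.mem_preimage,
        Set.mem_ofPred_eq]
      tauto
    · simpa [hc] using hU
  intro w hw
  by_contra hwP
  obtain ⟨K, hK, hKI, hKI'⟩ := exists_mem_Sph_ne_ne_neg I₀
  have hwI₀ : aff w.1 w.2 I₀ ∉ B := fun h =>
    ((hB I₀ hI₀).subset (show w ∈ sliceParams B I₀ from h)).1.2.1 rfl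
  obtain ⟨q, -, hqA, hqB⟩ := @IsConnected.isPreconnected _ (τs n) Ω hΩ.2 (Ω \ B) B hAopen hBopen
    (Set.subset_sdiff_union Ω B) ⟨_, hw, hw, hwI₀⟩
    ⟨_, (hUJ K hK ▸ hw : w ∈ sliceParams Ω K), ⟨w, ⟨hw, hwP⟩, K, ⟨hK, hKI, hKI'⟩, rfl⟩⟩
  exact hqA.2 hqB

theorem SliceDomain.eqOn_zero_of_real (hΩ : SliceDomain n Ω) (hax : AxSymm n Ω) (hI₀ : I₀ ∈ Sph)
    {h : (Fin n → ℝ) × (Fin n → ℝ) → Oct × Oct}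
    (hh : IsHolomorphicOn prodRot h (sliceParams Ω I₀))
    (hreal : ∀ x, (x, 0) ∈ sliceParams Ω I₀ → h (x, 0) = 0) :
    Set.EqOn h 0 (sliceParams Ω I₀) := by
  have hU : IsOpen (sliceParams Ω I₀) := isOpen_τs_iff.1 hΩ.1.2 I₀ hI₀
  have hsub := hΩ.sliceParams_subset hax hI₀ (P := {w | h =ᶠ[𝓝 w] 0})
    isOpen_setOfPred_eventually_nhds (hh.isOpen_diff_setOf_eventuallyEq_zero hU)
    fun x hx => hh.eventuallyEq_zero_of_real hU hreal hx
  exact fun w hw => (hsub hw).self_of_nhds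

lemma Holo.isHolomorphicOn {I : Oct} (hI : I ∈ Sph) {g : (Fin n → ℝ) × (Fin n → ℝ) → Oct}
    {U : Set ((Fin n → ℝ) × (Fin n → ℝ))} (hU : IsOpen U) (hg : Holo n I g U) :
    IsHolomorphicOn (lmul I) g U := fun p hp =>
  ⟨(hg.1.contDiffAt (hU.mem_nhds hp)).differentiableAt one_ne_zero,
    map_prodRot_of_single (lmul_lmul_of_mem_Sph hI) (hg.2 p hp)⟩

end Slices

theorem weak_slice_regular_is_slice_function_general (n : ℕ)
    (Ω : Set (Fin n → Oct)) (hΩ : SliceDomain n Ω) (hax : AxSymm n Ω)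
    (f : (Fin n → Oct) → Oct) (hf : WSliceReg n Ω f) :
    IsSliceFun n Ω f := by
  obtain ⟨I₀, hI₀⟩ := Oct.Sph_nonempty
  let F (I : Oct) := stem (Oct.lmul I) (fun p => f (aff p.1 p.2 I))
  have hF : ∀ I ∈ Sph, IsHolomorphicOn prodRot (F I) (sliceParams Ω I₀) := fun I hI => by
    rw [hax.sliceParams_eq hI₀ hI]
    exact isHolomorphicOn_stem (Oct.lmul_lmul_of_mem_Sph hI)
      (fun p => hax.prodConj_mem_sliceParams hI)
      ((hf I hI).isHolomorphicOn hI (isOpen_τs_iff.1 hΩ.1.2 I hI))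
  have hFeq : ∀ I ∈ Sph, Set.EqOn (F I) (F I₀) (sliceParams Ω I₀) := fun I hI p hp =>
    sub_eq_zero.1 <| hΩ.eqOn_zero_of_real hax hI₀ ((hF I hI).sub (hF I₀ hI₀))
      (fun x _ => by simp [F, stem_mk_zero, aff_zero_right x I I₀]) hp
  refine ⟨fun p => (F I₀ p).1, fun p => (F I₀ p).2, fun x y _ I hI hxy => ?_⟩
  show f (aff x y I) = (F I₀ (x, y)).1 + I * (F I₀ (x, y)).2
  rw [← hFeq I hI (hax x y I hI I₀ hI₀ hxy)]
  exact (stem_fst_add_stem_snd (g := fun p => f (aff p.1 p.2 I))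
    (Oct.lmul_lmul_of_mem_Sph hI) (x, y)).symm

/-- A weak slice regular function on an axially symmetric
slice-domain is a slice function. -/
theorem weak_slice_regular_is_slice_function (n : ℕ) (hn : 1 ≤ n)
    (Ω : Set (Fin n → Oct)) (hΩ : SliceDomain n Ω) (hax : AxSymm n Ω)
    (f : (Fin n → Oct) → Oct) (hf : WSliceReg n Ω f) :
    IsSliceFun n Ω f :=
  weak_slice_regular_is_slice_function_general n Ω hΩ hax f hf

end
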